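/- arXiv:1806.05472 — 2 statements merged into one kernel-verified Lean document; each statement's English description precedes it below -/
import Mathlib

section
/- Let A ∈ ℝ^{n×n} and B ∈ ℝ^{n×m} with (A,B) controllable and B ≠ 0. Write the singular value decomposition B = U [Σ 0; 0 0] Hᵀ where Σ ∈ ℝ^{r×r} is invertible diagonal (r = rank B < n), and partition U = [Ũ Ū] with Ũ ∈ ℝ^{n×r}, Ū ∈ ℝ^{n×(n−r)}. Then the pair (Φ, Γ) := (Ūᵀ A Ū, Ūᵀ A Ũ) is controllable, and moreover Γ ≠ 0 when n − r > 0. -/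
/-!
In the coordinates given by the orthogonal `U` the pair becomes `(UᵀAU, UᵀB)`, and the PBH rank
condition is invariant under such a change of coordinates. Since `UᵀB = [Σ 0; 0 0] Hᵀ`, the last
`q` rows of `[λ - UᵀAU, UᵀB]` are `[-Γ, λ - Φ, 0]`; they are rows of a matrix of full row rank,
so they have rank `q`, which is the PBH condition for `(Φ, Γ)`. If `Γ = 0`, this says that
`λ - Φ` is invertible for every `λ ∈ ℂ`, which fails at an eigenvalue of `Φ` when `q > 0`.
-/

open Matrix

/-- PBH test for controllability of the pair `(Φ, Γ)`. -/
def PBHControllable {k m : Type*} [Fintype k] [Fintype m] [DecidableEq k]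
    (Φ : Matrix k k ℝ) (Γ : Matrix k m ℝ) : Prop :=
  ∀ lam : ℂ,
    (Matrix.fromCols (lam • (1 : Matrix k k ℂ) - Φ.map (fun a => (a : ℂ)))
      (Γ.map (fun a => (a : ℂ)))).rank = Fintype.card k

namespace Matrix

variable {K ι κ l m n o : Type*}

theorem range_mulVecLin_fromCols [CommSemiring K] [Fintype m] [Fintype n]
    (X : Matrix l m K) (Y : Matrix l n K) :
    LinearMap.range (fromCols X Y).mulVecLin =
      LinearMap.range X.mulVecLin ⊔ LinearMap.range Y.mulVecLin := by
  apply le_antisymm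
  · rintro _ ⟨v, rfl⟩
    rw [mulVecLin_apply, ← Sum.elim_comp_inl_inr v, fromCols_mulVec_sumElim]
    exact Submodule.add_mem_sup ⟨_, rfl⟩ ⟨_, rfl⟩
  · refine sup_le ?_ ?_
    · rintro _ ⟨v, rfl⟩
      exact ⟨Sum.elim v 0, by simp⟩
    · rintro _ ⟨v, rfl⟩
      exact ⟨Sum.elim 0 v, by simp⟩

theorem rank_fromCols_zero [CommSemiring K] [Fintype m] [Fintype n] (X : Matrix l m K) :
    (fromCols X (0 : Matrix l n K)).rank = X.rank := by
  rw [rank, rank, range_mulVecLin_fromCols, mulVecLin_zero, LinearMap.range_zero, sup_bot_eq]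

theorem linearIndependent_row_of_rank_eq_card [Field K] [Fintype m] [Fintype n]
    {M : Matrix m n K} (h : M.rank = Fintype.card m) : LinearIndependent K M.row :=
  linearIndependent_iff_card_eq_finrank_span.mpr (by rw [← h, rank_eq_finrank_span_row]; rfl)

theorem rank_submatrix_of_rank_eq_card [Field K] [Fintype m] [Fintype n] [Fintype l]
    {M : Matrix m n K} (h : M.rank = Fintype.card m) {f : l → m} (hf : Function.Injective f) :
    (M.submatrix f id).rank = Fintype.card l :=
  ((linearIndependent_row_of_rank_eq_card h).comp f hf).rank_matrix

theorem det_ne_zero_of_rank_eq_card [Field K] [Fintype m] [DecidableEq m] {M : Matrix m m K}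
    (h : M.rank = Fintype.card m) : M.det ≠ 0 :=
  (isUnit_iff_isUnit_det M).mp
    (linearIndependent_rows_iff_isUnit.mp (linearIndependent_row_of_rank_eq_card h)) |>.ne_zero

theorem submatrix_transpose_mul_mul [Fintype m] [Fintype n] [CommSemiring K]
    (V : Matrix m ι K) (A : Matrix m n K) (W : Matrix n κ K) (f : l → ι) (g : o → κ) :
    (Vᵀ * A * W).submatrix f g = (V.submatrix id f)ᵀ * A * W.submatrix id g :=
  rfl

end Matrix

namespace PBHControllable

variable {k m : Type*} [Fintype k] [Fintype m] [DecidableEq k]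

theorem similar {A : Matrix k k ℝ} {B : Matrix k m ℝ} (h : PBHControllable A B)
    {V T : Matrix k k ℝ} (hVT : V * T = 1) : PBHControllable (V * A * T) (V * B) := by
  have hc : (fun a : ℝ => (a : ℂ)) = ⇑Complex.ofRealHom := rfl
  simp only [PBHControllable, hc] at h ⊢
  intro lam
  classical
  set c := Complex.ofRealHom
  have hVTc : V.map c * T.map c = 1 := by
    rw [← Matrix.map_mul, hVT, Matrix.map_one _ c.map_zero c.map_one]
  let E : Matrix (k ⊕ m) (k ⊕ m) ℂ := fromBlocks (T.map c) 0 0 1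
  have hE : IsUnit E.det := by
    rw [det_fromBlocks_zero₂₁, det_one, mul_one]
    exact isUnit_det_of_left_inverse hVTc
  have key : fromCols (lam • 1 - (V * A * T).map c) ((V * B).map c) =
      V.map c * fromCols (lam • 1 - A.map c) (B.map c) * E := by
    rw [mul_fromCols, fromCols_mul_fromBlocks]
    simp [Matrix.mul_sub, Matrix.sub_mul, Matrix.map_mul, hVTc, Matrix.mul_assoc]
  rw [key, rank_mul_eq_left_of_isUnit_det _ _ hE,
    rank_mul_eq_right_of_isUnit_det _ _ (isUnit_det_of_right_inverse hVTc)]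
  exact h lam

theorem submatrix_inr {α β μ : Type*} [Fintype α] [Fintype β] [Fintype μ] [DecidableEq α]
    [DecidableEq β] {P : Matrix (α ⊕ β) (α ⊕ β) ℝ} {G : Matrix (α ⊕ β) μ ℝ}
    (h : PBHControllable P G) (hG : G.submatrix Sum.inr id = 0) :
    PBHControllable (P.submatrix Sum.inr Sum.inr) (P.submatrix Sum.inr Sum.inl) := by
  intro lam
  set c : ℝ → ℂ := fun a => (a : ℂ)
  have hrows := rank_submatrix_of_rank_eq_card (h lam) Sum.inr_injective
  have hblock : (fromCols (lam • 1 - P.map c) (G.map c)).submatrix Sum.inr id =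
      fromCols (fromCols (-(P.submatrix Sum.inr Sum.inl).map c)
        (lam • 1 - (P.submatrix Sum.inr Sum.inr).map c)) 0 := by
    ext i ((j | j) | j)
    · simp [one_apply]
    · simp [one_apply]
    · simpa [c] using congrFun (congrFun hG i) j
  rw [hblock] at hrows
  rw [← hrows, rank_fromCols_zero, rank, rank, range_mulVecLin_fromCols, range_mulVecLin_fromCols,
    sup_comm, ← LinearMap.range_neg, ← map_neg]

theorem ne_zero [Nonempty k] {Φ : Matrix k k ℝ} {Γ : Matrix k m ℝ} (h : PBHControllable Φ Γ) :
    Γ ≠ 0 := by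
  rintro rfl
  set Φc := Φ.map (fun a => (a : ℂ))
  obtain ⟨μ, hμ⟩ := Complex.exists_root (f := Φc.charpoly) (by
    rw [← Polynomial.natDegree_pos_iff_degree_pos, charpoly_natDegree_eq_dim]
    exact Fintype.card_pos)
  have hrank : (μ • 1 - Φc).rank = Fintype.card k := by
    simpa [rank_fromCols_zero] using h μ
  apply det_ne_zero_of_rank_eq_card hrank
  rw [smul_one_eq_diagonal, ← scalar_apply, ← eval_charpoly]
  exact hμ

end PBHControllable

/-- Here `n = r + q`, and the columns of `B` are split as `m = r + m'`. -/
theorem svd_step_controllable_general (r q m' : ℕ)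
    (A : Matrix (Fin r ⊕ Fin q) (Fin r ⊕ Fin q) ℝ)
    (B : Matrix (Fin r ⊕ Fin q) (Fin r ⊕ Fin m') ℝ)
    (U : Matrix (Fin r ⊕ Fin q) (Fin r ⊕ Fin q) ℝ)
    (hU : Uᵀ * U = 1 ∧ U * Uᵀ = 1)
    (H : Matrix (Fin r ⊕ Fin m') (Fin r ⊕ Fin m') ℝ)
    (S : Matrix (Fin r) (Fin r) ℝ)
    (hB : B = U * (Matrix.fromBlocks S 0 0 0 : Matrix (Fin r ⊕ Fin q) (Fin r ⊕ Fin m') ℝ) * Hᵀ)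
    (hctrb : PBHControllable A B) :
    PBHControllable ((U.submatrix id Sum.inr)ᵀ * A * U.submatrix id Sum.inr)
        ((U.submatrix id Sum.inr)ᵀ * A * U.submatrix id Sum.inl) ∧
      (0 < q → (U.submatrix id Sum.inr)ᵀ * A * U.submatrix id Sum.inl ≠ 0) := by
  have hUB : (Uᵀ * B).submatrix Sum.inr id = 0 := by
    rw [hB, ← Matrix.mul_assoc, ← Matrix.mul_assoc, hU.1, Matrix.one_mul]
    ext i j
    simp [mul_apply]
  have hΦΓ := (hctrb.similar hU.1).submatrix_inr hUB
  rw [submatrix_transpose_mul_mul, submatrix_transpose_mul_mul] at hΦΓ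
  exact ⟨hΦΓ, fun hq => haveI : Nonempty (Fin q) := ⟨⟨0, hq⟩⟩; hΦΓ.ne_zero⟩

/-- one SVD step preserves controllability, and the new input
matrix is nonzero when `n - r > 0`.  Here `n = r + q` and the columns of the
input matrix are partitioned as `m = r + m'`. -/
theorem svd_step_controllable (r q m' : ℕ) (hr : 0 < r)
    (A : Matrix (Fin r ⊕ Fin q) (Fin r ⊕ Fin q) ℝ)
    (B : Matrix (Fin r ⊕ Fin q) (Fin r ⊕ Fin m') ℝ)
    (hBne : B ≠ 0)
    (U : Matrix (Fin r ⊕ Fin q) (Fin r ⊕ Fin q) ℝ)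
    (hU : Uᵀ * U = 1 ∧ U * Uᵀ = 1)
    (H : Matrix (Fin r ⊕ Fin m') (Fin r ⊕ Fin m') ℝ)
    (hH : Hᵀ * H = 1 ∧ H * Hᵀ = 1)
    (S : Matrix (Fin r) (Fin r) ℝ)
    (hSdiag : ∃ d : Fin r → ℝ, S = Matrix.diagonal d) (hS : IsUnit S)
    (hB : B = U * (Matrix.fromBlocks S 0 0 0 : Matrix (Fin r ⊕ Fin q) (Fin r ⊕ Fin m') ℝ) * Hᵀ)
    (hrank : B.rank = r) (hrn : r < r + q)
    (hctrb : PBHControllable A B) :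
    PBHControllable ((U.submatrix id Sum.inr)ᵀ * A * U.submatrix id Sum.inr)
        ((U.submatrix id Sum.inr)ᵀ * A * U.submatrix id Sum.inl) ∧
      (0 < q → (U.submatrix id Sum.inr)ᵀ * A * U.submatrix id Sum.inl ≠ 0) :=
  svd_step_controllable_general r q m' A B U hU H S hB hctrb
end

section
/- Let Q(λ) = [λI − Φ, Γ] for Φ ∈ ℝ^{k×k}, Γ ∈ ℝ^{k×p} with rank Q(λ) = k for all λ ∈ ℂ (PBH controllability). Let Γ = U[Σ 0; 0 0]Hᵀ with Σ ∈ ℝ^{r×r} invertible, U = [Ũ Ū] orthogonal, and define Φ' = Ūᵀ Φ Ū, Γ' = Ūᵀ Φ Ũ. Then rank[λI − Φ', Γ'] = k − r for every λ ∈ ℂ. -/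
open Matrix

/-!
A left null vector `w` of `[λI − Φ', Γ']` lifts to `v = w Ūᵀ`. Orthogonality of `U` gives
`v U = (0, w)`, and the two blocks of `[λI − Φ', Γ']` give `v Φ U = λ (0, w)`; multiplying by
`Uᵀ` yields `v Φ = λ v`. Moreover `v Γ = 0`, since the columns of `Γ = U [Σ 0; 0 0] Hᵀ` lie in the
span of `Ũ`. The PBH condition for `(Φ, Γ)` forces `v = 0`, hence `w = v Ū = 0`.
-/

namespace Matrix

section Blocks

variable {R : Type*} [CommSemiring R] {m a b c d e : Type*} [Fintype m] {U : Matrix m (a ⊕ b) R}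

theorem transpose_submatrix_inr_mul_submatrix_inl [DecidableEq a] [DecidableEq b]
    (hU : Uᵀ * U = 1) : (U.submatrix id Sum.inr)ᵀ * U.submatrix id Sum.inl = 0 := by
  ext i j
  simpa [mul_apply] using congrFun (congrFun hU (Sum.inr i)) (Sum.inl j)

theorem transpose_submatrix_inr_mul_submatrix_inr [DecidableEq a] [DecidableEq b]
    (hU : Uᵀ * U = 1) : (U.submatrix id Sum.inr)ᵀ * U.submatrix id Sum.inr = 1 := by
  ext i j
  simpa [mul_apply, one_apply] using congrFun (congrFun hU (Sum.inr i)) (Sum.inr j)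

theorem transpose_submatrix_inr_mul_eq_fromCols [DecidableEq a] [DecidableEq b]
    (hU : Uᵀ * U = 1) : (U.submatrix id Sum.inr)ᵀ * U = fromCols 0 1 := by
  rw [← transpose_submatrix_inr_mul_submatrix_inl hU,
    ← transpose_submatrix_inr_mul_submatrix_inr hU, ← mul_fromCols]
  exact congrArg _ (fromCols_toCols U).symm

theorem transpose_submatrix_inr_mul_fromBlocks_eq_zero [Fintype a] [Fintype b] [DecidableEq a]
    [DecidableEq b] [Fintype c] [Fintype d] (hU : Uᵀ * U = 1) (S : Matrix a c R)
    (M : Matrix (c ⊕ d) e R) :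
    (U.submatrix id Sum.inr)ᵀ * (U * (fromBlocks S 0 0 0 : Matrix (a ⊕ b) (c ⊕ d) R) * M) = 0 := by
  rw [← Matrix.mul_assoc, ← Matrix.mul_assoc, transpose_submatrix_inr_mul_eq_fromCols hU,
    fromCols_mul_fromBlocks]
  simp

end Blocks

section PBH

variable {K : Type*} [Field K] {m n a b : Type*} [Fintype m] [Fintype n]

theorem rank_eq_card_iff_vecMul_eq_zero (M : Matrix m n K) :
    M.rank = Fintype.card m ↔ ∀ v : m → K, v ᵥ* M = 0 → v = 0 := by
  rw [rank_eq_finrank_span_row, ← Set.finrank, eq_comm,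
    ← linearIndependent_iff_card_eq_finrank_span, ← vecMul_injective_iff, ← coe_vecMulLinear,
    injective_iff_map_eq_zero]
  rfl

theorem rank_fromCols_smul_one_sub_eq_card_iff [DecidableEq m] (Φ : Matrix m m K)
    (Γ : Matrix m n K) (lam : K) :
    (fromCols (lam • 1 - Φ) Γ).rank = Fintype.card m ↔
      ∀ v : m → K, v ᵥ* Φ = lam • v → v ᵥ* Γ = 0 → v = 0 := by
  simp only [rank_eq_card_iff_vecMul_eq_zero, vecMul_fromCols, vecMul_sub, vecMul_smul,
    vecMul_one, ← Sum.elim_zero_zero, Sum.elim_eq_iff, sub_eq_zero, eq_comm (a := lam • _),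
    and_imp]

theorem rank_fromCols_compression_eq_card [Fintype a] [Fintype b] [DecidableEq m]
    [DecidableEq a] [DecidableEq b] {U : Matrix m (a ⊕ b) K} (hU : Uᵀ * U = 1) (hU' : U * Uᵀ = 1)
    {Φ : Matrix m m K} {Γ : Matrix m n K} (hΓ : (U.submatrix id Sum.inr)ᵀ * Γ = 0) {lam : K}
    (h : (fromCols (lam • 1 - Φ) Γ).rank = Fintype.card m) :
    (fromCols (lam • 1 - (U.submatrix id Sum.inr)ᵀ * Φ * U.submatrix id Sum.inr)
      ((U.submatrix id Sum.inr)ᵀ * Φ * U.submatrix id Sum.inl)).rank = Fintype.card b := by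
  rw [rank_fromCols_smul_one_sub_eq_card_iff] at h ⊢
  intro w hwΦ hwΓ
  obtain ⟨v, hv⟩ : ∃ v, w ᵥ* (U.submatrix id Sum.inr)ᵀ = v := ⟨_, rfl⟩
  have hvU : v ᵥ* U = Sum.elim (0 : a → K) w := by
    rw [← hv, vecMul_vecMul, transpose_submatrix_inr_mul_eq_fromCols hU, vecMul_fromCols,
      vecMul_zero, vecMul_one]
  have hvΦU : v ᵥ* (Φ * U) = lam • Sum.elim (0 : a → K) w := by
    rw [← fromCols_toCols U, mul_fromCols, vecMul_fromCols, ← hv, vecMul_vecMul, vecMul_vecMul,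
      ← Matrix.mul_assoc, ← Matrix.mul_assoc]
    change Sum.elim (w ᵥ* ((U.submatrix id Sum.inr)ᵀ * Φ * U.submatrix id Sum.inl))
      (w ᵥ* ((U.submatrix id Sum.inr)ᵀ * Φ * U.submatrix id Sum.inr)) = _
    rw [hwΓ, hwΦ]
    ext (i | i) <;> simp
  have hvΦ : v ᵥ* Φ = lam • v :=
    calc v ᵥ* Φ = v ᵥ* (Φ * U) ᵥ* Uᵀ := by
          rw [vecMul_vecMul, Matrix.mul_assoc, hU', Matrix.mul_one]
      _ = lam • (v ᵥ* U ᵥ* Uᵀ) := by rw [hvΦU, ← hvU, smul_vecMul]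
      _ = lam • v := by rw [vecMul_vecMul, hU', vecMul_one]
  have hv0 : v = 0 := h v hvΦ (by rw [← hv, vecMul_vecMul, hΓ, vecMul_zero])
  calc w = v ᵥ* U.submatrix id Sum.inr := by
        rw [← hv, vecMul_vecMul, transpose_submatrix_inr_mul_submatrix_inr hU, vecMul_one]
    _ = 0 := by rw [hv0, zero_vecMul]

end PBH

end Matrix

/-- The state dimension is `k = r + q` and the input dimension is `p = r + p'`. -/
theorem pbh_rank_step_general (r q p' : ℕ)
    (Φ : Matrix (Fin r ⊕ Fin q) (Fin r ⊕ Fin q) ℝ)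
    (Γ : Matrix (Fin r ⊕ Fin q) (Fin r ⊕ Fin p') ℝ)
    (hPBH : ∀ lam : ℂ,
      (Matrix.fromCols (lam • (1 : Matrix (Fin r ⊕ Fin q) (Fin r ⊕ Fin q) ℂ)
          - Φ.map (fun a => (a : ℂ))) (Γ.map (fun a => (a : ℂ)))).rank = r + q)
    (U : Matrix (Fin r ⊕ Fin q) (Fin r ⊕ Fin q) ℝ)
    (hU : Uᵀ * U = 1 ∧ U * Uᵀ = 1)
    (H : Matrix (Fin r ⊕ Fin p') (Fin r ⊕ Fin p') ℝ)
    (S : Matrix (Fin r) (Fin r) ℝ)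
    (hΓ : Γ = U * (Matrix.fromBlocks S 0 0 0 : Matrix (Fin r ⊕ Fin q) (Fin r ⊕ Fin p') ℝ) * Hᵀ) :
    ∀ lam : ℂ,
      (Matrix.fromCols (lam • (1 : Matrix (Fin q) (Fin q) ℂ)
          - ((U.submatrix id Sum.inr)ᵀ * Φ * U.submatrix id Sum.inr).map (fun a => (a : ℂ)))
        (((U.submatrix id Sum.inr)ᵀ * Φ * U.submatrix id Sum.inl).map (fun a => (a : ℂ)))).rank
        = (r + q) - r := by
  intro lam
  have hf : (fun a : ℝ => (a : ℂ)) = Complex.ofRealHom := rfl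
  have hUc : (U.map Complex.ofRealHom)ᵀ * U.map Complex.ofRealHom = 1 := by
    rw [← transpose_map, ← Matrix.map_mul, hU.1, Matrix.map_one _ (map_zero _) (map_one _)]
  have hUc' : U.map Complex.ofRealHom * (U.map Complex.ofRealHom)ᵀ = 1 := by
    rw [← transpose_map, ← Matrix.map_mul, hU.2, Matrix.map_one _ (map_zero _) (map_one _)]
  have hΓc :
      ((U.map Complex.ofRealHom).submatrix id Sum.inr)ᵀ * Γ.map Complex.ofRealHom = 0 := by
    rw [submatrix_map, ← transpose_map, ← Matrix.map_mul, hΓ,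
      transpose_submatrix_inr_mul_fromBlocks_eq_zero hU.1, Matrix.map_zero _ (map_zero _)]
  have key := rank_fromCols_compression_eq_card hUc hUc' hΓc (lam := lam)
    (by simpa [hf] using hPBH lam)
  rw [hf, Matrix.map_mul, Matrix.map_mul, Matrix.map_mul, Matrix.map_mul, transpose_map,
    ← submatrix_map, ← submatrix_map, Nat.add_sub_cancel_left]
  rwa [Fintype.card_fin] at key

/-- the PBH rank identity for one SVD reduction step.
Here the state dimension is `k = r + q` (indices `Fin r ⊕ Fin q`) and the
input dimension `p = r + p'` (indices `Fin r ⊕ Fin p'`). -/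
theorem pbh_rank_step (r q p' : ℕ) (hr : 0 < r) (hq : 0 < q)
    (Φ : Matrix (Fin r ⊕ Fin q) (Fin r ⊕ Fin q) ℝ)
    (Γ : Matrix (Fin r ⊕ Fin q) (Fin r ⊕ Fin p') ℝ)
    (hPBH : ∀ lam : ℂ,
      (Matrix.fromCols (lam • (1 : Matrix (Fin r ⊕ Fin q) (Fin r ⊕ Fin q) ℂ)
          - Φ.map (fun a => (a : ℂ))) (Γ.map (fun a => (a : ℂ)))).rank = r + q)
    (U : Matrix (Fin r ⊕ Fin q) (Fin r ⊕ Fin q) ℝ)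
    (hU : Uᵀ * U = 1 ∧ U * Uᵀ = 1)
    (H : Matrix (Fin r ⊕ Fin p') (Fin r ⊕ Fin p') ℝ)
    (hH : Hᵀ * H = 1 ∧ H * Hᵀ = 1)
    (S : Matrix (Fin r) (Fin r) ℝ)
    (hSdiag : ∃ d : Fin r → ℝ, S = Matrix.diagonal d) (hS : IsUnit S)
    (hΓ : Γ = U * (Matrix.fromBlocks S 0 0 0 : Matrix (Fin r ⊕ Fin q) (Fin r ⊕ Fin p') ℝ) * Hᵀ)
    (hrank : Γ.rank = r) :
    ∀ lam : ℂ,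
      (Matrix.fromCols (lam • (1 : Matrix (Fin q) (Fin q) ℂ)
          - ((U.submatrix id Sum.inr)ᵀ * Φ * U.submatrix id Sum.inr).map (fun a => (a : ℂ)))
        (((U.submatrix id Sum.inr)ᵀ * Φ * U.submatrix id Sum.inl).map (fun a => (a : ℂ)))).rank
        = (r + q) - r :=
  pbh_rank_step_general r q p' Φ Γ hPBH U hU H S hΓ
end
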